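/- The complex Hessian (Levi form) of f(z,w) = (1 + |z|²)|ψ|², where ψ(z,w) = w − (1/2)Σₖ z̄ₖ², evaluated at a point (z,w) on a tangent vector (Z,W) ∈ ℂⁿ × ℂ, equals (1+|z|²)|W|² + |ψ|²|Z|² + (1+|z|²)|z·Z|² − 2 Re(ψ (z·Z)(z·Z̄)) + 2 Re(ψ W̄ (z̄·Z)). -/

import Mathlib

open Complex

/-- The Levi form of a real-valued function `f` on a complex normed space:
`L_f(p)(v) = (1/4)(D²f(p)(v,v) + D²f(p)(iv,iv))`. -/
noncomputable def leviForm {E : Type*} [NormedAddCommGroup E] [NormedSpace ℂ E]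
    (f : E → ℝ) (p v : E) : ℝ :=
  (1 / 4) * (iteratedFDeriv ℝ 2 f p ![v, v]
    + iteratedFDeriv ℝ 2 f p ![Complex.I • v, Complex.I • v])

/-- `ψ(z,w) = w − (1/2)Σₖ z̄ₖ²`. -/
noncomputable def psiF (n : ℕ) (p : (Fin n → ℂ) × ℂ) : ℂ :=
  p.2 - (1 / 2) * ∑ k, (starRingEnd ℂ (p.1 k)) ^ 2

/-- `f(z,w) = (1 + |z|²)|ψ(z,w)|²`. -/
noncomputable def fF (n : ℕ) (p : (Fin n → ℂ) × ℂ) : ℝ :=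
  (1 + ∑ k, Complex.normSq (p.1 k)) * Complex.normSq (psiF n p)

/-! Both terms of the Levi form are second derivatives at `0` of the restrictions of `f` to the
real lines `t ↦ p + t v` and `t ↦ p + t (i v)`. Along such a line `1 + |z|²` and `ψ` are
quadratic in `t`, so the restriction is a real polynomial `s(t) |q(t)|²` and its second
derivative at `0` is a formal computation. Passing from `v` to `i v` changes the sign of the
`t²` coefficient of `ψ` (it comes from the antiholomorphic term `Σ z̄ₖ²`), so that contribution
cancels in the sum. -/

open ComplexConjugate Polynomial

theorem Polynomial.iteratedDeriv_eval {𝕜 : Type*} [NontriviallyNormedField 𝕜] (P : 𝕜[X]) (n : ℕ) :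
    iteratedDeriv n (fun x => P.eval x) = fun x => (derivative^[n] P).eval x := by
  induction n with
  | zero => simp
  | succ n ih =>
    rw [iteratedDeriv_succ, ih, Function.iterate_succ_apply']
    funext x
    exact Polynomial.deriv _

theorem iteratedFDeriv_apply_const_eq_iteratedDeriv_comp_add_smul {E F : Type*}
    [NormedAddCommGroup E] [NormedSpace ℝ E] [NormedAddCommGroup F] [NormedSpace ℝ F]
    {f : E → F} {n : ℕ} (hf : ContDiff ℝ n f) (p v : E) :
    iteratedFDeriv ℝ n f p (fun _ => v) = iteratedDeriv n (fun t : ℝ => f (p + t • v)) 0 := by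
  have hshift : ContDiff ℝ n (fun x => f (p + x)) := hf.comp (contDiff_const.add contDiff_id)
  have hline : (fun t : ℝ => f (p + t • v)) =
      (fun x => f (p + x)) ∘ ContinuousLinearMap.toSpanSingleton ℝ v := rfl
  rw [iteratedDeriv_eq_iteratedFDeriv, hline,
    ContinuousLinearMap.iteratedFDeriv_comp_right _ hshift _ le_rfl, iteratedFDeriv_comp_add_left]
  simp

theorem leviForm_eq_iteratedDeriv {E : Type*} [NormedAddCommGroup E] [NormedSpace ℂ E]
    {f : E → ℝ} (hf : ContDiff ℝ 2 f) (p v : E) :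
    leviForm f p v = (1 / 4) * (iteratedDeriv 2 (fun t : ℝ => f (p + t • v)) 0
      + iteratedDeriv 2 (fun t : ℝ => f (p + t • (I • v))) 0) := by
  simp only [leviForm, Matrix.vecCons_const, Matrix.vec_single_eq_const,
    iteratedFDeriv_apply_const_eq_iteratedDeriv_comp_add_smul hf]

theorem iteratedDeriv_two_mul_normSq_quadratic (s₀ s₁ s₂ : ℝ) (a b c : ℂ) :
    iteratedDeriv 2 (fun t : ℝ => (s₀ + s₁ * t + s₂ * t ^ 2) * normSq (a + t * b + t ^ 2 * c)) 0
      = 2 * (s₂ * normSq a + 2 * s₁ * (conj a * b).re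
          + s₀ * (normSq b + 2 * (conj a * c).re)) := by
  let P : ℝ[X] := (C s₀ + C s₁ * X + C s₂ * X ^ 2) *
    ((C a.re + C b.re * X + C c.re * X ^ 2) ^ 2 + (C a.im + C b.im * X + C c.im * X ^ 2) ^ 2)
  have hP : (fun t : ℝ => (s₀ + s₁ * t + s₂ * t ^ 2) * normSq (a + t * b + t ^ 2 * c))
      = fun t => P.eval t := by
    funext t
    simp only [P, eval_mul, eval_add, eval_pow, eval_C, eval_X, normSq_apply, add_re, add_im,
      mul_re, mul_im, ofReal_re, ofReal_im, ← ofReal_pow]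
    ring
  rw [hP, Polynomial.iteratedDeriv_eval]
  simp only [P, Function.iterate_succ_apply', Function.iterate_zero_apply, derivative_mul,
    derivative_add, derivative_pow, derivative_C, derivative_X, eval_add, eval_mul, eval_pow,
    eval_C, eval_X, eval_zero, eval_one, derivative_zero, derivative_one,
    normSq_apply, mul_re, conj_re, conj_im]
  ring

@[fun_prop]
theorem Complex.contDiff_normSq {m : WithTop ℕ∞} : ContDiff ℝ m normSq := by
  simpa only [← normSq_eq_norm_sq] using contDiff_norm_sq ℝ (E := ℂ)

@[fun_prop]
theorem Complex.contDiff_conj {m : WithTop ℕ∞} : ContDiff ℝ m (conj : ℂ → ℂ) :=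
  conjCLE.contDiff

theorem Complex.normSq_add_ofReal_mul (z w : ℂ) (t : ℝ) :
    normSq (z + t * w) = normSq z + 2 * (conj z * w).re * t + normSq w * t ^ 2 := by
  simp only [normSq_apply, add_re, add_im, mul_re, mul_im, ofReal_re, ofReal_im, conj_re, conj_im]
  ring

theorem contDiff_fF (n : ℕ) {m : WithTop ℕ∞} : ContDiff ℝ m (fF n) := by
  unfold fF psiF
  fun_prop

theorem fF_add_smul (n : ℕ) (p v : (Fin n → ℂ) × ℂ) (t : ℝ) :
    fF n (p + t • v) =
      ((1 + ∑ k, normSq (p.1 k)) + 2 * (∑ k, conj (p.1 k) * v.1 k).re * t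
          + (∑ k, normSq (v.1 k)) * t ^ 2)
        * normSq (psiF n p + t * (v.2 - conj (∑ k, p.1 k * v.1 k))
          + t ^ 2 * (-(1 / 2) * conj (∑ k, v.1 k ^ 2))) := by
  have hpt : ∀ k, (p + t • v).1 k = p.1 k + t * v.1 k := fun k => by simp [real_smul]
  have hsq : ∑ k, conj ((p + t • v).1 k) ^ 2 = ∑ k, conj (p.1 k) ^ 2
      + t * (2 * conj (∑ k, p.1 k * v.1 k)) + t ^ 2 * conj (∑ k, v.1 k ^ 2) := by
    simp only [hpt, map_add, map_mul, conj_ofReal, map_sum, map_pow, Finset.mul_sum,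
      ← Finset.sum_add_distrib]
    exact Finset.sum_congr rfl fun k _ => by ring
  have hw : (p + t • v).2 = p.2 + t * v.2 := by simp [real_smul]
  rw [fF, psiF, psiF, hsq, hw]
  simp only [hpt, normSq_add_ofReal_mul, Finset.sum_add_distrib, ← Finset.sum_mul,
    ← Finset.mul_sum, ← re_sum]
  congr 1
  · ring
  · congr 1
    ring

/-- The Levi form of `f = (1+|z|²)|ψ|²` at `(z,w)` on `(Z,W)` equals
`(1+|z|²)|W|² + |ψ|²|Z|² + (1+|z|²)|z·Z|² − 2Re(ψ(z·Z)(z·Z̄)) + 2Re(ψ W̄ (z̄·Z))`. -/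
theorem leviForm_fF_formula (n : ℕ) (p v : (Fin n → ℂ) × ℂ) :
    leviForm (fF n) p v =
      (1 + ∑ k, Complex.normSq (p.1 k)) * Complex.normSq v.2
      + Complex.normSq (psiF n p) * ∑ k, Complex.normSq (v.1 k)
      + (1 + ∑ k, Complex.normSq (p.1 k)) * Complex.normSq (∑ k, p.1 k * v.1 k)
      - 2 * (psiF n p * (∑ k, p.1 k * v.1 k) * (∑ k, p.1 k * starRingEnd ℂ (v.1 k))).re
      + 2 * (psiF n p * starRingEnd ℂ v.2 * (∑ k, starRingEnd ℂ (p.1 k) * v.1 k)).re := by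
  rw [leviForm_eq_iteratedDeriv (contDiff_fF n)]
  simp_rw [fF_add_smul]
  rw [iteratedDeriv_two_mul_normSq_quadratic, iteratedDeriv_two_mul_normSq_quadratic]
  have hzZbar : ∑ k, p.1 k * conj (v.1 k) = conj (∑ k, conj (p.1 k) * v.1 k) := by simp
  simp only [Prod.smul_fst, Prod.smul_snd, Pi.smul_apply, smul_eq_mul, normSq_mul, normSq_I,
    one_mul, mul_left_comm _ I, mul_pow, I_sq, neg_one_mul, ← Finset.mul_sum,
    Finset.sum_neg_distrib, hzZbar]
  generalize ∑ k, conj (p.1 k) * v.1 k = A, ∑ k, p.1 k * v.1 k = B, ∑ k, v.1 k ^ 2 = C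
  simp only [normSq_apply, mul_re, mul_im, sub_re, sub_im, neg_re, neg_im, conj_re, conj_im,
    I_re, I_im, div_re, div_im, one_re, one_im, map_mul, map_neg, conj_I]
  ring
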